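/- Under the assumptions of the previous lemma (in particular $u^L(\mathbf{x},j) < M_{-j}$, $u^L(\mathbf{x},j) \geq V$, $U_j(\mathbf{x}) \neq \emptyset$, and $\mathbf{y}^* \in \overline{U_j(\mathbf{x})}$ attains $V$), define $S = \{\ell \in [n]\setminus\{j\} : u^L(\mathbf{y}^*,\ell) = V\}$. Then for every $\mathbf{y} \in U_j(\mathbf{x})$ it holds that $\min_{\ell \in S} u^L(\mathbf{y},\ell) < V$. -/

import Mathlib

/-!
Suppose some `y ∈ U_j(x)` had `u^L(y, ℓ) ≥ V` for every `ℓ ∈ S`. Nudging `y` slightly towards a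
point `z` with `min_{ℓ ≠ j} u^L(z, ℓ) > u^L(x, j) ≥ V` gives `w ∈ U_j(x)` with `u^L(w, ℓ) > V` on `S`.
Then a small step from `y*` towards `w` stays in `U_j(x)`, keeps `u^L(·, ℓ) > V` for the indices
outside `S` (where it held strictly at `y*`) and creates it on `S`, so its minimum over `ℓ ≠ j`
exceeds `V`, contradicting the maximality of `V`.
-/

open Finset

noncomputable section

def simplex (m : ℕ) : Set (Fin m → ℝ) := stdSimplex ℝ (Fin m)

def util {m n : ℕ} (u : Fin m → Fin n → ℝ) (y : Fin m → ℝ) (j : Fin n) : ℝ :=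
  ∑ i, y i * u i j

open Filter Topology

theorem eventually_lt_convexComb {A B c : ℝ} (hA : c ≤ A) (h : c < A ∨ c < B) :
    ∀ᶠ t in 𝓝[>] (0 : ℝ), c < (1 - t) * A + t * B := by
  rcases h with hcA | hcB
  · have hlim : Tendsto (fun t : ℝ => (1 - t) * A + t * B) (𝓝[>] 0) (𝓝 A) :=
      ((by fun_prop : Continuous fun t : ℝ => (1 - t) * A + t * B).tendsto' 0 A
        (by simp)).mono_left nhdsWithin_le_nhds
    exact hlim.eventually (lt_mem_nhds hcA)
  · filter_upwards [Ioo_mem_nhdsGT one_pos] with t ⟨ht0, ht1⟩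
    nlinarith

theorem Convex.eventually_convexComb_mem {E : Type*} [AddCommGroup E] [Module ℝ E] {s : Set E}
    (hs : Convex ℝ s) {a b : E} (ha : a ∈ s) (hb : b ∈ s) :
    ∀ᶠ t in 𝓝[>] (0 : ℝ), (1 - t) • a + t • b ∈ s := by
  filter_upwards [Ioo_mem_nhdsGT one_pos] with t ⟨ht0, ht1⟩
  exact hs ha hb (by linarith) ht0.le (by ring)

section util

variable {m n : ℕ} (u : Fin m → Fin n → ℝ)

theorem util_convexComb (s t : ℝ) (a b : Fin m → ℝ) (ℓ : Fin n) :
    util u (s • a + t • b) ℓ = s * util u a ℓ + t * util u b ℓ := by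
  simp only [util, Pi.add_apply, Pi.smul_apply, smul_eq_mul, add_mul, sum_add_distrib, mul_sum,
    mul_assoc]

theorem continuous_util (ℓ : Fin n) : Continuous fun y : Fin m → ℝ => util u y ℓ :=
  continuous_finsetSum _ fun i _ => (continuous_apply i).mul continuous_const

theorem eventually_lt_util_convexComb {a b : Fin m → ℝ} {ℓ : Fin n} {c : ℝ}
    (ha : c ≤ util u a ℓ) (h : c < util u a ℓ ∨ c < util u b ℓ) :
    ∀ᶠ t in 𝓝[>] (0 : ℝ), c < util u ((1 - t) • a + t • b) ℓ := by
  simpa only [util_convexComb] using eventually_lt_convexComb ha h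

theorem util_le_of_mem_closure {c : ℝ} {ℓ : Fin n} {y : Fin m → ℝ} {s : Set (Fin m → ℝ)}
    (hs : ∀ z ∈ s, c < util u z ℓ) (hy : y ∈ closure s) : c ≤ util u y ℓ :=
  closure_minimal (fun z hz => (hs z hz).le) (isClosed_le continuous_const (continuous_util u ℓ)) hy

end util

theorem stmt_10_general (m n : ℕ) (uL : Fin m → Fin n → ℝ)
    (x : Fin m → ℝ) (j : Fin n)
    (hMj : ∃ z ∈ simplex m, ∀ ℓ, ℓ ≠ j → util uL x j < util uL z ℓ)
    (V : ℝ) (ystar : Fin m → ℝ)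
    (hystar : ystar ∈ closure {z | z ∈ simplex m ∧ util uL x j < util uL z j})
    (hmin1 : ∀ ℓ, ℓ ≠ j → V ≤ util uL ystar ℓ)
    (hVmax : ∀ y ∈ closure {z | z ∈ simplex m ∧ util uL x j < util uL z j},
      ∃ ℓ, ℓ ≠ j ∧ util uL y ℓ ≤ V)
    (hxV : V ≤ util uL x j) :
    ∀ y ∈ simplex m, util uL x j < util uL y j →
      ∃ ℓ, ℓ ≠ j ∧ util uL ystar ℓ = V ∧ util uL y ℓ < V := by
  intro y hy hyj
  by_contra! hS
  obtain ⟨z, hz, hzx⟩ := hMj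
  have hystar_simplex : ystar ∈ simplex m :=
    closure_minimal (fun _ h => h.1) (isClosed_stdSimplex ℝ (Fin m)) hystar
  have hystar_j : util uL x j ≤ util uL ystar j := util_le_of_mem_closure uL (fun _ h => h.2) hystar
  obtain ⟨t, ⟨hw, hwj⟩, hwS⟩ := ((convex_stdSimplex ℝ (Fin m)).eventually_convexComb_mem hy hz
    |>.and (eventually_lt_util_convexComb uL hyj.le (.inl hyj))
    |>.and (eventually_all.2 fun ℓ => eventually_imp_distrib_left.2 fun hℓ =>
      eventually_imp_distrib_left.2 fun hℓV => eventually_lt_util_convexComb uL (hS ℓ hℓ hℓV)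
        (.inr (hxV.trans_lt (hzx ℓ hℓ))))).exists
  obtain ⟨s, ⟨hp, hpj⟩, hpV⟩ := ((convex_stdSimplex ℝ (Fin m)).eventually_convexComb_mem
      hystar_simplex hw
    |>.and (eventually_lt_util_convexComb uL hystar_j (.inr hwj))
    |>.and (eventually_all.2 fun ℓ => eventually_imp_distrib_left.2 fun hℓ =>
      eventually_lt_util_convexComb uL (hmin1 ℓ hℓ)
        ((hmin1 ℓ hℓ).lt_or_eq.imp_right fun hV => hwS ℓ hℓ hV.symm))).exists
  obtain ⟨ℓ, hℓ, hpℓ⟩ := hVmax _ (subset_closure ⟨hp, hpj⟩)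
  exact (hpV ℓ hℓ).not_ge hpℓ

/-- Lemma: $\min_{\ell \in S} u^L(y, \ell) < V$ for all $y \in U_j(x)$. -/
theorem stmt_10 (m n : ℕ) (hn : 2 ≤ n) (uL : Fin m → Fin n → ℝ)
    (x : Fin m → ℝ) (hx : x ∈ simplex m) (j : Fin n)
    (hMj : ∃ z ∈ simplex m, ∀ ℓ, ℓ ≠ j → util uL x j < util uL z ℓ)
    (hU : ∃ y ∈ simplex m, util uL x j < util uL y j)
    (V : ℝ) (ystar : Fin m → ℝ)
    (hystar : ystar ∈ closure {z | z ∈ simplex m ∧ util uL x j < util uL z j})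
    (hmin1 : ∀ ℓ, ℓ ≠ j → V ≤ util uL ystar ℓ)
    (hmin2 : ∃ ℓ, ℓ ≠ j ∧ util uL ystar ℓ = V)
    (hVmax : ∀ y ∈ closure {z | z ∈ simplex m ∧ util uL x j < util uL z j},
      ∃ ℓ, ℓ ≠ j ∧ util uL y ℓ ≤ V)
    (hxV : V ≤ util uL x j) :
    ∀ y ∈ simplex m, util uL x j < util uL y j →
      ∃ ℓ, ℓ ≠ j ∧ util uL ystar ℓ = V ∧ util uL y ℓ < V :=
  stmt_10_general m n uL x j hMj V ystar hystar hmin1 hVmax hxV
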